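/- Let V : ℝ² ∖ {0} → ℝ be smooth. Then V satisfies on ℝ² ∖ {0} all three PDEs (P) 3x₂∂₁V − 3x₁∂₂V + x₁x₂(∂₁₁V − ∂₂₂V) + (x₂² − x₁²)∂₁₂V = 0, (X) 3∂₁V + x₁(∂₁₁V − ∂₂₂V) + 2x₂∂₁₂V = 0, and (Y) 3∂₂V + x₂(∂₂₂V − ∂₁₁V) + 2x₁∂₁₂V = 0, if and only if there exist constants m, n ∈ ℝ such that V(x) = m/‖x‖ + n for all x ∈ ℝ² ∖ {0}; i.e., V is, up to an additive constant and overall scale, the Kepler potential. -/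

import Mathlib

open Real

/-- Partial derivative with respect to the first Cartesian coordinate. -/
noncomputable def pd1 (f : ℝ × ℝ → ℝ) (x : ℝ × ℝ) : ℝ :=
  deriv (fun t => f (t, x.2)) x.1

/-- Partial derivative with respect to the second Cartesian coordinate. -/
noncomputable def pd2 (f : ℝ × ℝ → ℝ) (x : ℝ × ℝ) : ℝ :=
  deriv (fun t => f (x.1, t)) x.2

/-!
Since 2(P) − x₂(X) + x₁(Y) = 3(x₂∂₁V − x₁∂₂V), the potential has vanishing angular derivative and
is therefore constant on circles about the origin. On the positive x₁-axis, differentiating the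
identity x₂∂₁V = x₁∂₂V in x₂ gives t∂₂₂V = ∂₁V, and (X) becomes the Euler equation
t∂₁₁V + 2∂₁V = 0, whose solutions are m/t + n. Conversely, the second derivatives of m/r + n are
m(3xᵢxⱼ − r²δᵢⱼ)/r⁵, and (P), (X), (Y) are then checked algebraically.
-/

open Filter Topology

theorem sq_add_sq_pos_of_ne_zero {x : ℝ × ℝ} (hx : x ≠ 0) : 0 < x.1 ^ 2 + x.2 ^ 2 := by
  have : x.1 ≠ 0 ∨ x.2 ≠ 0 := by
    contrapose! hx
    exact Prod.ext hx.1 hx.2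
  rcases this with h | h <;> positivity

section PartialDerivatives

variable {f g : ℝ × ℝ → ℝ} {x : ℝ × ℝ}

theorem pd2_eq_pd1_comp_swap (f : ℝ × ℝ → ℝ) (x : ℝ × ℝ) :
    pd2 f x = pd1 (f ∘ Prod.swap) x.swap :=
  rfl

theorem pd2_eq_pd1_comp_swap_of_comp_swap (hf : f ∘ Prod.swap = f) :
    pd2 f = pd1 f ∘ Prod.swap := by
  ext x
  rw [pd2_eq_pd1_comp_swap, hf]
  rfl

theorem DifferentiableAt.hasDerivAt_pd1 (hf : DifferentiableAt ℝ f x) :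
    HasDerivAt (fun t => f (t, x.2)) (pd1 f x) x.1 :=
  (hf.comp x.1 (differentiableAt_id.prodMk (differentiableAt_const _))).hasDerivAt

theorem DifferentiableAt.hasDerivAt_pd2 (hf : DifferentiableAt ℝ f x) :
    HasDerivAt (fun t => f (x.1, t)) (pd2 f x) x.2 :=
  (hf.comp x.2 ((differentiableAt_const _).prodMk differentiableAt_id)).hasDerivAt

theorem DifferentiableAt.fderiv_apply_eq (hf : DifferentiableAt ℝ f x) (v : ℝ × ℝ) :
    fderiv ℝ f x v = v.1 * pd1 f x + v.2 * pd2 f x := by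
  have h1 : pd1 f x = fderiv ℝ f x (1, 0) :=
    (hf.hasFDerivAt.comp_hasDerivAt x.1 ((hasDerivAt_id _).prodMk (hasDerivAt_const _ _))).deriv
  have h2 : pd2 f x = fderiv ℝ f x (0, 1) :=
    (hf.hasFDerivAt.comp_hasDerivAt x.2 ((hasDerivAt_const _ _).prodMk (hasDerivAt_id _))).deriv
  have hv : v = v.1 • ((1 : ℝ), (0 : ℝ)) + v.2 • ((0 : ℝ), (1 : ℝ)) := by
    ext <;> simp
  rw [h1, h2]
  conv_lhs => rw [hv]
  simp only [map_add, map_smul, smul_eq_mul]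

theorem DifferentiableAt.hasDerivAt_comp_curve {c : ℝ → ℝ × ℝ} {c' : ℝ × ℝ} {t : ℝ}
    (hf : DifferentiableAt ℝ f (c t)) (hc : HasDerivAt c c' t) :
    HasDerivAt (f ∘ c) (c'.1 * pd1 f (c t) + c'.2 * pd2 f (c t)) t := by
  rw [← hf.fderiv_apply_eq]
  exact hf.hasFDerivAt.comp_hasDerivAt t hc

theorem Filter.EventuallyEq.pd1_eq (h : f =ᶠ[𝓝 x] g) : pd1 f x = pd1 g x :=
  (h.comp_tendsto ((continuous_id.prodMk continuous_const).tendsto x.1)).deriv_eq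

theorem Filter.EventuallyEq.pd2_eq (h : f =ᶠ[𝓝 x] g) : pd2 f x = pd2 g x :=
  (h.comp_tendsto ((continuous_const.prodMk continuous_id).tendsto x.2)).deriv_eq

theorem Filter.EventuallyEq.pd1 (h : f =ᶠ[𝓝 x] g) : pd1 f =ᶠ[𝓝 x] pd1 g :=
  (eventually_eventuallyEq_nhds.2 h).mono fun _ hy => hy.pd1_eq

theorem Filter.EventuallyEq.pd2 (h : f =ᶠ[𝓝 x] g) : pd2 f =ᶠ[𝓝 x] pd2 g :=
  (eventually_eventuallyEq_nhds.2 h).mono fun _ hy => hy.pd2_eq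

variable {s : Set (ℝ × ℝ)} {n : WithTop ℕ∞}

theorem ContDiffOn.pd1 (hf : ContDiffOn ℝ (n + 1) f s) (hs : IsOpen s) :
    ContDiffOn ℝ n (pd1 f) s := by
  refine ((hf.fderiv_of_isOpen hs le_rfl).clm_apply
    (contDiffOn_const (c := ((1 : ℝ), (0 : ℝ))))).congr fun y hy => ?_
  have hfy := (hf.differentiableOn (by simp)).differentiableAt (hs.mem_nhds hy)
  simp [hfy.fderiv_apply_eq]

theorem ContDiffOn.pd2 (hf : ContDiffOn ℝ (n + 1) f s) (hs : IsOpen s) :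
    ContDiffOn ℝ n (pd2 f) s := by
  refine ((hf.fderiv_of_isOpen hs le_rfl).clm_apply
    (contDiffOn_const (c := ((0 : ℝ), (1 : ℝ))))).congr fun y hy => ?_
  have hfy := (hf.differentiableOn (by simp)).differentiableAt (hs.mem_nhds hy)
  simp [hfy.fderiv_apply_eq]

end PartialDerivatives

section Forward

variable {V : ℝ × ℝ → ℝ}

theorem apply_eq_apply_sqrt_of_angular (hV : DifferentiableOn ℝ V {x | x ≠ 0})
    (hA : ∀ x : ℝ × ℝ, x ≠ 0 → x.2 * pd1 V x - x.1 * pd2 V x = 0)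
    {x : ℝ × ℝ} (hx : x ≠ 0) : V x = V (√(x.1 ^ 2 + x.2 ^ 2), 0) := by
  set z : ℂ := ⟨x.1, x.2⟩
  have hz : z ≠ 0 := fun h => hx (Prod.ext (congrArg Complex.re h) (congrArg Complex.im h))
  -- the circle of radius ‖x‖, which passes through x at θ = arg (x₁ + i x₂)
  let c : ℝ → ℝ × ℝ := fun θ => (‖z‖ * cos θ, ‖z‖ * sin θ)
  have hc_ne : ∀ θ, c θ ≠ 0 := fun θ h => by
    have h1 : ‖z‖ * cos θ = 0 := congrArg Prod.fst h
    have h2 : ‖z‖ * sin θ = 0 := congrArg Prod.snd h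
    have : ‖z‖ ^ 2 * (sin θ ^ 2 + cos θ ^ 2) = 0 := by
      linear_combination ‖z‖ * sin θ * h2 + ‖z‖ * cos θ * h1
    simp [hz] at this
  have hderiv : ∀ θ, HasDerivAt (V ∘ c) 0 θ := fun θ => by
    have hc : HasDerivAt c (‖z‖ * -sin θ, ‖z‖ * cos θ) θ :=
      ((hasDerivAt_cos θ).const_mul ‖z‖).prodMk ((hasDerivAt_sin θ).const_mul ‖z‖)
    convert (hV.differentiableAt (isOpen_ne.mem_nhds (hc_ne θ))).hasDerivAt_comp_curve hc using 1
    linear_combination hA (c θ) (hc_ne θ)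
  have hconst := is_const_of_deriv_eq_zero (fun θ => (hderiv θ).differentiableAt)
    (fun θ => (hderiv θ).deriv) (Complex.arg z) 0
  simp only [Function.comp_apply, c] at hconst
  rwa [Complex.norm_mul_cos_arg, Complex.norm_mul_sin_arg,
    cos_zero, sin_zero, mul_one, mul_zero, Complex.norm_eq_sqrt_sq_add_sq] at hconst

theorem mul_pd2_pd2_eq_pd1_of_angular {t : ℝ} (ht : t ≠ 0)
    (h₁ : DifferentiableAt ℝ (pd1 V) (t, 0)) (h₂ : DifferentiableAt ℝ (pd2 V) (t, 0))
    (hA : ∀ x : ℝ × ℝ, x ≠ 0 → x.2 * pd1 V x - x.1 * pd2 V x = 0) :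
    t * pd2 (pd2 V) (t, 0) = pd1 V (t, 0) := by
  have hline : (fun s => s * pd1 V (t, s)) = fun s => t * pd2 V (t, s) :=
    funext fun s => by linear_combination hA (t, s) (by simp [ht])
  have hL : HasDerivAt (fun s => s * pd1 V (t, s))
      (1 * pd1 V (t, 0) + 0 * pd2 (pd1 V) (t, 0)) 0 :=
    (hasDerivAt_id' 0).mul h₁.hasDerivAt_pd2
  have hR : HasDerivAt (fun s => t * pd2 V (t, s)) (t * pd2 (pd2 V) (t, 0)) 0 :=
    h₂.hasDerivAt_pd2.const_mul t
  rw [hline] at hL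
  linear_combination hR.unique hL

theorem exists_eq_div_add_of_euler_ode {g g' g'' : ℝ → ℝ}
    (hg : ∀ t > 0, HasDerivAt g (g' t) t) (hg' : ∀ t > 0, HasDerivAt g' (g'' t) t)
    (hode : ∀ t > 0, 2 * g' t + t * g'' t = 0) : ∃ m n : ℝ, ∀ t > 0, g t = m / t + n := by
  have hI : ∀ t > 0, HasDerivAt (fun s => s ^ 2 * g' s) (2 * t * g' t + t ^ 2 * g'' t) t :=
    fun t ht => ((hasDerivAt_pow 2 t).mul (hg' t ht)).congr_deriv (by ring)
  obtain ⟨c, hc⟩ := isOpen_Ioi.exists_is_const_of_deriv_eq_zero isPreconnected_Ioi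
    (fun t ht => (hI t ht).differentiableAt.differentiableWithinAt)
    (fun t (ht : 0 < t) => by rw [(hI t ht).deriv, Pi.zero_apply]; linear_combination t * hode t ht)
  have hK : ∀ t > 0, HasDerivAt (fun s => -c * s⁻¹) (g' t) t := fun t ht =>
    ((hasDerivAt_inv ht.ne').const_mul (-c)).congr_deriv (by rw [← hc t ht]; field_simp)
  obtain ⟨n, hn⟩ := isOpen_Ioi.exists_eq_add_of_deriv_eq isPreconnected_Ioi
    (fun t ht => (hg t ht).differentiableAt.differentiableWithinAt)
    (fun t ht => (hK t ht).differentiableAt.differentiableWithinAt)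
    (fun t (ht : 0 < t) => (hg t ht).deriv.trans (hK t ht).deriv.symm)
  exact ⟨-c, n, fun t ht => by rw [hn ht, div_eq_mul_inv]⟩

theorem exists_apply_axis_eq_div_add (hV : ContDiffOn ℝ 2 V {x | x ≠ 0})
    (hX : ∀ x : ℝ × ℝ, x ≠ 0 →
      3 * pd1 V x + x.1 * (pd1 (pd1 V) x - pd2 (pd2 V) x) + 2 * x.2 * pd1 (pd2 V) x = 0)
    (hA : ∀ x : ℝ × ℝ, x ≠ 0 → x.2 * pd1 V x - x.1 * pd2 V x = 0) :
    ∃ m n : ℝ, ∀ t > 0, V (t, 0) = m / t + n := by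
  have hV' : ContDiffOn ℝ (1 + 1) V {x | x ≠ 0} := hV.of_le one_add_one_eq_two.le
  have haxis : ∀ t : ℝ, t > 0 → {x : ℝ × ℝ | x ≠ 0} ∈ 𝓝 (t, 0) := fun t ht =>
    isOpen_ne.mem_nhds (by simp [ht.ne'])
  have hd₀ := fun t ht => (hV.differentiableOn two_ne_zero).differentiableAt (haxis t ht)
  have hd₁ := fun t ht =>
    ((hV'.pd1 isOpen_ne).differentiableOn one_ne_zero).differentiableAt (haxis t ht)
  have hd₂ := fun t ht =>
    ((hV'.pd2 isOpen_ne).differentiableOn one_ne_zero).differentiableAt (haxis t ht)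
  refine exists_eq_div_add_of_euler_ode (fun t ht => (hd₀ t ht).hasDerivAt_pd1)
    (fun t ht => (hd₁ t ht).hasDerivAt_pd1) fun t ht => ?_
  have h := mul_pd2_pd2_eq_pd1_of_angular ht.ne' (hd₁ t ht) (hd₂ t ht) hA
  linear_combination hX (t, 0) (by simp [ht.ne']) + h

end Forward

section Kepler

theorem hasDerivAt_div_sqrt_pow (p q b : ℝ) (k : ℕ) {t : ℝ} (ht : 0 < t ^ 2 + b) :
    HasDerivAt (fun s => (p * s + q) / √(s ^ 2 + b) ^ k)
      (p / √(t ^ 2 + b) ^ k - k * (p * t + q) * t / √(t ^ 2 + b) ^ (k + 2)) t := by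
  have hr : 0 < √(t ^ 2 + b) := sqrt_pos.2 ht
  have hsqrt : HasDerivAt (fun s => √(s ^ 2 + b)) (t / √(t ^ 2 + b)) t :=
    (((hasDerivAt_pow 2 t).add_const b).sqrt ht.ne').congr_deriv (by field_simp; ring)
  refine (((hasDerivAt_id' t).const_mul p).add_const q |>.div (hsqrt.pow k)
    (pow_ne_zero k hr.ne')).congr_deriv ?_
  rcases k with _ | k
  · simp
  · simp only [Pi.pow_apply, Nat.add_sub_cancel]
    field_simp
    ring

theorem pd1_div_sqrt_pow (p : ℝ) (q : ℝ → ℝ) (k : ℕ) {x : ℝ × ℝ} (hx : x ≠ 0) :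
    pd1 (fun y => (p * y.1 + q y.2) / √(y.1 ^ 2 + y.2 ^ 2) ^ k) x =
      p / √(x.1 ^ 2 + x.2 ^ 2) ^ k
        - k * (p * x.1 + q x.2) * x.1 / √(x.1 ^ 2 + x.2 ^ 2) ^ (k + 2) :=
  (hasDerivAt_div_sqrt_pow p (q x.2) (x.2 ^ 2) k (sq_add_sq_pos_of_ne_zero hx)).deriv

noncomputable def keplerPotential (m n : ℝ) (x : ℝ × ℝ) : ℝ :=
  m / √(x.1 ^ 2 + x.2 ^ 2) + n

variable {m n : ℝ} {x : ℝ × ℝ}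

theorem keplerPotential_comp_swap : keplerPotential m n ∘ Prod.swap = keplerPotential m n := by
  ext x
  simp [keplerPotential, add_comm]

theorem pd1_keplerPotential (hx : x ≠ 0) :
    pd1 (keplerPotential m n) x = -m * x.1 / √(x.1 ^ 2 + x.2 ^ 2) ^ 3 := by
  have h := (hasDerivAt_div_sqrt_pow 0 m (x.2 ^ 2) 1 (sq_add_sq_pos_of_ne_zero hx)).add_const n
  simp only [zero_mul, zero_add, pow_one, Nat.cast_one] at h
  exact h.deriv.trans (by ring)

theorem pd2_keplerPotential_eq_comp_swap :
    pd2 (keplerPotential m n) = pd1 (keplerPotential m n) ∘ Prod.swap :=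
  pd2_eq_pd1_comp_swap_of_comp_swap keplerPotential_comp_swap

theorem pd2_keplerPotential (hx : x ≠ 0) :
    pd2 (keplerPotential m n) x = -m * x.2 / √(x.1 ^ 2 + x.2 ^ 2) ^ 3 := by
  rw [pd2_keplerPotential_eq_comp_swap, Function.comp_apply,
    pd1_keplerPotential (Prod.swap_injective.ne hx)]
  simp [add_comm]

theorem pd1_pd1_keplerPotential (hx : x ≠ 0) :
    pd1 (pd1 (keplerPotential m n)) x =
      m * (2 * x.1 ^ 2 - x.2 ^ 2) / √(x.1 ^ 2 + x.2 ^ 2) ^ 5 := by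
  have h : pd1 (keplerPotential m n) =ᶠ[𝓝 x]
      fun y => (-m * y.1 + 0) / √(y.1 ^ 2 + y.2 ^ 2) ^ 3 :=
    (eventually_ne_nhds hx).mono fun y hy => by simp only [pd1_keplerPotential hy, add_zero]
  have hr : √(x.1 ^ 2 + x.2 ^ 2) ≠ 0 := (sqrt_pos.2 (sq_add_sq_pos_of_ne_zero hx)).ne'
  have hr2 : √(x.1 ^ 2 + x.2 ^ 2) ^ 2 = x.1 ^ 2 + x.2 ^ 2 :=
    sq_sqrt (sq_add_sq_pos_of_ne_zero hx).le
  rw [h.pd1_eq, pd1_div_sqrt_pow (-m) (fun _ => 0) 3 hx]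
  field_simp
  push_cast
  linear_combination (-m * √(x.1 ^ 2 + x.2 ^ 2) ^ 5) * hr2

theorem pd1_pd2_keplerPotential (hx : x ≠ 0) :
    pd1 (pd2 (keplerPotential m n)) x = 3 * m * x.1 * x.2 / √(x.1 ^ 2 + x.2 ^ 2) ^ 5 := by
  have h : pd2 (keplerPotential m n) =ᶠ[𝓝 x]
      fun y => (0 * y.1 + -m * y.2) / √(y.1 ^ 2 + y.2 ^ 2) ^ 3 :=
    (eventually_ne_nhds hx).mono fun y hy => by
      simp only [pd2_keplerPotential hy, zero_mul, zero_add]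
  rw [h.pd1_eq, pd1_div_sqrt_pow 0 (fun y₂ => -m * y₂) 3 hx]
  ring

theorem pd2_pd2_keplerPotential (hx : x ≠ 0) :
    pd2 (pd2 (keplerPotential m n)) x =
      m * (2 * x.2 ^ 2 - x.1 ^ 2) / √(x.1 ^ 2 + x.2 ^ 2) ^ 5 := by
  rw [pd2_eq_pd1_comp_swap, pd2_keplerPotential_eq_comp_swap, Function.comp_assoc,
    Prod.swap_swap_eq, Function.comp_id, pd1_pd1_keplerPotential (Prod.swap_injective.ne hx)]
  simp [add_comm]

theorem bertrandDarboux_of_eventuallyEq_keplerPotential {V : ℝ × ℝ → ℝ}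
    (hx : x ≠ 0) (hV : V =ᶠ[𝓝 x] keplerPotential m n) :
    (3 * x.2 * pd1 V x - 3 * x.1 * pd2 V x
        + x.1 * x.2 * (pd1 (pd1 V) x - pd2 (pd2 V) x)
        + (x.2 ^ 2 - x.1 ^ 2) * pd1 (pd2 V) x = 0) ∧
      (3 * pd1 V x + x.1 * (pd1 (pd1 V) x - pd2 (pd2 V) x) + 2 * x.2 * pd1 (pd2 V) x = 0) ∧
      (3 * pd2 V x + x.2 * (pd2 (pd2 V) x - pd1 (pd1 V) x) + 2 * x.1 * pd1 (pd2 V) x = 0) := by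
  rw [hV.pd1.pd1_eq, hV.pd2.pd2_eq, hV.pd2.pd1_eq, hV.pd1_eq, hV.pd2_eq, pd1_keplerPotential hx,
    pd2_keplerPotential hx, pd1_pd1_keplerPotential hx, pd2_pd2_keplerPotential hx,
    pd1_pd2_keplerPotential hx]
  have hr : √(x.1 ^ 2 + x.2 ^ 2) ≠ 0 := (sqrt_pos.2 (sq_add_sq_pos_of_ne_zero hx)).ne'
  have hr2 : √(x.1 ^ 2 + x.2 ^ 2) ^ 2 = x.1 ^ 2 + x.2 ^ 2 :=
    sq_sqrt (sq_add_sq_pos_of_ne_zero hx).le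
  refine ⟨?_, ?_, ?_⟩ <;> field_simp
  · ring
  · linear_combination (-3 * m * x.1) * hr2
  · linear_combination (-3 * m * x.2) * hr2

end Kepler

/-- A smooth potential `V` on `ℝ² ∖ {0}` satisfies the three Bertrand–Darboux
compatibility PDEs (P), (X), (Y) with the polar and the two parabolic Killing
tensors of the Euclidean plane if and only if `V(x) = m/‖x‖ + n` for some
constants `m, n`, i.e. `V` is, up to an additive constant and overall scale,
the Kepler potential. -/
theorem bertrand_darboux_iff_kepler
    (V : ℝ × ℝ → ℝ) (hV : ContDiffOn ℝ (⊤ : ℕ∞) V {x : ℝ × ℝ | x ≠ 0}) :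
    ((∀ x : ℝ × ℝ, x ≠ 0 →
        3 * x.2 * pd1 V x - 3 * x.1 * pd2 V x
          + x.1 * x.2 * (pd1 (pd1 V) x - pd2 (pd2 V) x)
          + (x.2 ^ 2 - x.1 ^ 2) * pd1 (pd2 V) x = 0) ∧
      (∀ x : ℝ × ℝ, x ≠ 0 →
        3 * pd1 V x + x.1 * (pd1 (pd1 V) x - pd2 (pd2 V) x)
          + 2 * x.2 * pd1 (pd2 V) x = 0) ∧
      (∀ x : ℝ × ℝ, x ≠ 0 →
        3 * pd2 V x + x.2 * (pd2 (pd2 V) x - pd1 (pd1 V) x)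
          + 2 * x.1 * pd1 (pd2 V) x = 0)) ↔
    ∃ m n : ℝ, ∀ x : ℝ × ℝ, x ≠ 0 →
      V x = m / Real.sqrt (x.1 ^ 2 + x.2 ^ 2) + n := by
  constructor
  · rintro ⟨hP, hX, hY⟩
    have hA : ∀ x : ℝ × ℝ, x ≠ 0 → x.2 * pd1 V x - x.1 * pd2 V x = 0 := fun x hx => by
      linear_combination (2 * hP x hx - x.2 * hX x hx + x.1 * hY x hx) / 3
    have hV2 : ContDiffOn ℝ 2 V {x | x ≠ 0} := hV.of_le (WithTop.coe_le_coe.2 le_top)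
    obtain ⟨m, n, hmn⟩ := exists_apply_axis_eq_div_add hV2 hX hA
    refine ⟨m, n, fun x hx => ?_⟩
    rw [apply_eq_apply_sqrt_of_angular (hV2.differentiableOn two_ne_zero) hA hx]
    exact hmn _ (sqrt_pos.2 (sq_add_sq_pos_of_ne_zero hx))
  · rintro ⟨m, n, hK⟩
    have h := fun x (hx : x ≠ 0) => bertrandDarboux_of_eventuallyEq_keplerPotential hx
      ((eventually_ne_nhds hx).mono fun y hy => hK y hy)
    exact ⟨fun x hx => (h x hx).1, fun x hx => (h x hx).2.1, fun x hx => (h x hx).2.2⟩
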